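/- arXiv:2106.01000 — 2 statements merged into one kernel-verified Lean document; each statement's English description precedes it below -/
import Mathlib

section
/- Let n, m be unit vectors in ℝ^{d+1} with ⟨n, m⟩ ≠ 0, P = I − n⊗n, P_h = I − m⊗m. Define B = P P_h and B⁻ = P_h (I − (n⊗m)/⟨n,m⟩) P. Then B B⁻ = P and B⁻ B = P_h, viewing B as a map from range(P_h) to range(P) and B⁻ as its inverse. -/
/-!
`B⁻` is the oblique projection `Q = I - n⊗m/⟨n,m⟩` onto `m^⊥` along `n`. Its range lies in `m^⊥`
and it kills `n`, so `P_h Q = Q = Q P`, i.e. `B⁻ = Q`. As `P` also kills `n` and `Q` fixes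
`m^⊥ = range P_h`, we get `B B⁻ = P P_h Q = P Q = P` and `B⁻ B = Q P P_h = Q P_h = P_h`.
-/

open Matrix

namespace Matrix

variable {K ι : Type*} [Field K] [Fintype ι] [DecidableEq ι]

def obliqueProj (u v : ι → K) : Matrix ι ι K :=
  1 - (u ⬝ᵥ v)⁻¹ • vecMulVec u v

variable {u v : ι → K}

theorem vecMulVec_mul_obliqueProj (huv : u ⬝ᵥ v ≠ 0) (w : ι → K) :
    vecMulVec w v * obliqueProj u v = 0 := by
  rw [obliqueProj, mul_sub, mul_one, Matrix.mul_smul, vecMulVec_mul_vecMulVec,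
    dotProduct_comm v u, ← vecMulVec_smul, smul_smul, inv_mul_cancel₀ huv, one_smul, sub_self]

theorem obliqueProj_mul_vecMulVec (huv : u ⬝ᵥ v ≠ 0) (w : ι → K) :
    obliqueProj u v * vecMulVec u w = 0 := by
  rw [obliqueProj, sub_mul, one_mul, smul_mul, vecMulVec_mul_vecMulVec,
    dotProduct_comm v u, ← vecMulVec_smul, smul_smul, inv_mul_cancel₀ huv, one_smul, sub_self]

theorem one_sub_vecMulVec_mul_obliqueProj (huv : u ⬝ᵥ v ≠ 0) :
    (1 - vecMulVec v v) * obliqueProj u v = obliqueProj u v := by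
  rw [sub_mul, one_mul, vecMulVec_mul_obliqueProj huv, sub_zero]

theorem obliqueProj_mul_one_sub_vecMulVec (huv : u ⬝ᵥ v ≠ 0) :
    obliqueProj u v * (1 - vecMulVec u u) = obliqueProj u v := by
  rw [mul_sub, mul_one, obliqueProj_mul_vecMulVec huv, sub_zero]

theorem one_sub_vecMulVec_mul_obliqueProj_of_dotProduct_self (hu : u ⬝ᵥ u = 1) :
    (1 - vecMulVec u u) * obliqueProj u v = 1 - vecMulVec u u := by
  rw [obliqueProj, mul_sub, mul_one, Matrix.mul_smul, sub_mul, one_mul,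
    vecMulVec_mul_vecMulVec, hu, one_smul, sub_self, smul_zero, sub_zero]

theorem obliqueProj_mul_one_sub_vecMulVec_of_dotProduct_self (hv : v ⬝ᵥ v = 1) :
    obliqueProj u v * (1 - vecMulVec v v) = 1 - vecMulVec v v := by
  rw [obliqueProj, sub_mul, one_mul, smul_mul, mul_sub, mul_one,
    vecMulVec_mul_vecMulVec, hv, one_smul, sub_self, smul_zero, sub_zero]

end Matrix

/-- Flat case of the derivative of the closest-point projection: for unit
vectors `n, m` with `⟨n,m⟩ ≠ 0`, `P = I - n⊗n`, `Ph = I - m⊗m`, the maps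
`B = P Ph` and `B⁻ = Ph (I - n⊗m/⟨n,m⟩) P` satisfy `B B⁻ = P` and
`B⁻ B = Ph`. -/
theorem flat_closest_point_projection_inverse (d : ℕ) (n m : Fin (d + 1) → ℝ)
    (hn : ∑ i, n i ^ 2 = 1) (hm : ∑ i, m i ^ 2 = 1)
    (hnm : n ⬝ᵥ m ≠ 0) :
    ((1 - Matrix.vecMulVec n n) * (1 - Matrix.vecMulVec m m)) *
        ((1 - Matrix.vecMulVec m m) *
          (1 - (n ⬝ᵥ m)⁻¹ • Matrix.vecMulVec n m) * (1 - Matrix.vecMulVec n n))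
      = 1 - Matrix.vecMulVec n n ∧
    ((1 - Matrix.vecMulVec m m) *
          (1 - (n ⬝ᵥ m)⁻¹ • Matrix.vecMulVec n m) * (1 - Matrix.vecMulVec n n)) *
        ((1 - Matrix.vecMulVec n n) * (1 - Matrix.vecMulVec m m))
      = 1 - Matrix.vecMulVec m m := by
  have hn' : n ⬝ᵥ n = 1 := by simpa only [dotProduct, sq] using hn
  have hm' : m ⬝ᵥ m = 1 := by simpa only [dotProduct, sq] using hm
  have hB_inv : (1 - vecMulVec m m) * obliqueProj n m * (1 - vecMulVec n n) = obliqueProj n m := by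
    rw [one_sub_vecMulVec_mul_obliqueProj hnm, obliqueProj_mul_one_sub_vecMulVec hnm]
  rw [← obliqueProj, hB_inv]
  constructor
  · rw [Matrix.mul_assoc, one_sub_vecMulVec_mul_obliqueProj hnm,
      one_sub_vecMulVec_mul_obliqueProj_of_dotProduct_self hn']
  · rw [← Matrix.mul_assoc, obliqueProj_mul_one_sub_vecMulVec hnm,
      obliqueProj_mul_one_sub_vecMulVec_of_dotProduct_self hm']
end

section
/- Let n, m be unit vectors in ℝ^{d+1} with ⟨n,m⟩ > 0, and let P = I − n⊗n, P_h = I − m⊗m, B = P P_h. Then ‖B B^T − P‖_F ≤ C‖n − m‖² for an absolute constant C (e.g. C = 4): the map B is an approximate isometry between the two hyperplanes with error quadratic in the normal deviation. -/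
/-!
With `P = I - n nᵀ` and `Q = I - m mᵀ` symmetric idempotents, `B Bᵀ = P Q P`, so
`B Bᵀ - P = -P (m mᵀ) P = -(P m)(P m)ᵀ`, a rank-one matrix of Frobenius norm `‖P m‖²`.
Since `‖P m‖² = 1 - ⟨n, m⟩²` and `‖n - m‖² = 2 - 2⟨n, m⟩`, their difference is `(1 - ⟨n, m⟩)² ≥ 0`.
-/

open Matrix

section Algebra

variable {ι R : Type*} [CommRing R]

theorem transpose_one_sub_vecMulVec_self [DecidableEq ι] (v : ι → R) :
    (1 - vecMulVec v v)ᵀ = 1 - vecMulVec v v := by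
  rw [transpose_sub, transpose_one, transpose_vecMulVec]

variable [Fintype ι]

theorem isIdempotentElem_vecMulVec_self {v : ι → R} (hv : v ⬝ᵥ v = 1) :
    IsIdempotentElem (vecMulVec v v) := by
  rw [IsIdempotentElem, vecMulVec_mul_vecMulVec, hv, one_smul]

theorem mul_mul_transpose_eq_mul_mul {P Q : Matrix ι ι R} (hP : Pᵀ = P) (hQ : Qᵀ = Q)
    (hQQ : IsIdempotentElem Q) : P * Q * (P * Q)ᵀ = P * Q * P := by
  rw [transpose_mul, hP, hQ, ← Matrix.mul_assoc, Matrix.mul_assoc P, hQQ.eq]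

theorem mul_vecMulVec_self_mul_of_transpose_eq {P : Matrix ι ι R} (hP : Pᵀ = P) (v : ι → R) :
    P * vecMulVec v v * P = vecMulVec (P *ᵥ v) (P *ᵥ v) := by
  rw [mul_vecMulVec, vecMulVec_mul, ← mulVec_transpose, hP]

variable [DecidableEq ι]

theorem mul_one_sub_vecMulVec_mul_transpose_sub {P : Matrix ι ι R} (hP : Pᵀ = P)
    (hPP : IsIdempotentElem P) {v : ι → R} (hv : v ⬝ᵥ v = 1) :
    P * (1 - vecMulVec v v) * (P * (1 - vecMulVec v v))ᵀ - P =
      -vecMulVec (P *ᵥ v) (P *ᵥ v) := by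
  rw [mul_mul_transpose_eq_mul_mul hP (transpose_one_sub_vecMulVec_self v)
      (isIdempotentElem_vecMulVec_self hv).one_sub,
    Matrix.mul_sub, Matrix.sub_mul, Matrix.mul_one, hPP.eq,
    mul_vecMulVec_self_mul_of_transpose_eq hP]
  abel

theorem one_sub_vecMulVec_self_mulVec (n m : ι → R) :
    (1 - vecMulVec n n) *ᵥ m = m - (n ⬝ᵥ m) • n := by
  rw [sub_mulVec, one_mulVec, vecMulVec_mulVec, op_smul_eq_smul]

theorem dotProduct_self_one_sub_vecMulVec_self_mulVec {n : ι → R} (hn : n ⬝ᵥ n = 1)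
    (m : ι → R) :
    ((1 - vecMulVec n n) *ᵥ m) ⬝ᵥ ((1 - vecMulVec n n) *ᵥ m) = m ⬝ᵥ m - (n ⬝ᵥ m) ^ 2 := by
  rw [one_sub_vecMulVec_self_mulVec]
  simp only [dotProduct_sub, sub_dotProduct, dotProduct_smul, smul_dotProduct, smul_eq_mul,
    hn, dotProduct_comm m n]
  ring

end Algebra

section Real

variable {ι : Type*} [Fintype ι]

theorem sum_sq_eq_dotProduct_self (v : ι → ℝ) : ∑ i, v i ^ 2 = v ⬝ᵥ v := by
  simp only [dotProduct, sq]

theorem sum_sum_sq_vecMulVec_apply (v w : ι → ℝ) :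
    ∑ i, ∑ j, vecMulVec v w i j ^ 2 = (v ⬝ᵥ v) * (w ⬝ᵥ w) := by
  simp only [vecMulVec_apply, mul_pow, ← Finset.mul_sum, ← Finset.sum_mul,
    sum_sq_eq_dotProduct_self]

theorem dotProduct_self_nonneg (v : ι → ℝ) : 0 ≤ v ⬝ᵥ v := by
  simpa using dotProduct_star_self_nonneg v

variable [DecidableEq ι]

theorem dotProduct_self_one_sub_vecMulVec_self_mulVec_le {n m : ι → ℝ} (hn : n ⬝ᵥ n = 1)
    (hm : m ⬝ᵥ m = 1) :
    ((1 - vecMulVec n n) *ᵥ m) ⬝ᵥ ((1 - vecMulVec n n) *ᵥ m) ≤ (n - m) ⬝ᵥ (n - m) := by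
  rw [dotProduct_self_one_sub_vecMulVec_self_mulVec hn]
  simp only [dotProduct_sub, sub_dotProduct, hn, hm, dotProduct_comm m n]
  nlinarith [sq_nonneg (1 - n ⬝ᵥ m)]

end Real

theorem flat_B_approximate_isometry_general (d : ℕ) (n m : Fin (d + 1) → ℝ)
    (hn : ∑ i, n i ^ 2 = 1) (hm : ∑ i, m i ^ 2 = 1) :
    Real.sqrt (∑ i, ∑ j,
        (((((1 - Matrix.vecMulVec n n) * (1 - Matrix.vecMulVec m m)) *
            ((1 - Matrix.vecMulVec n n) * (1 - Matrix.vecMulVec m m))ᵀ -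
          (1 - Matrix.vecMulVec n n)) : Matrix (Fin (d + 1)) (Fin (d + 1)) ℝ) i j) ^ 2)
      ≤ 4 * ∑ i, (n i - m i) ^ 2 := by
  rw [sum_sq_eq_dotProduct_self] at hn hm
  rw [mul_one_sub_vecMulVec_mul_transpose_sub (transpose_one_sub_vecMulVec_self n)
    (isIdempotentElem_vecMulVec_self hn).one_sub hm]
  simp only [Matrix.neg_apply, neg_sq, sum_sum_sq_vecMulVec_apply]
  rw [Real.sqrt_mul_self (dotProduct_self_nonneg _)]
  calc _ ≤ (n - m) ⬝ᵥ (n - m) := dotProduct_self_one_sub_vecMulVec_self_mulVec_le hn hm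
    _ ≤ 4 * ((n - m) ⬝ᵥ (n - m)) := le_mul_of_one_le_left (dotProduct_self_nonneg _) (by norm_num)
    _ = 4 * ∑ i, (n i - m i) ^ 2 := by rw [← sum_sq_eq_dotProduct_self]; rfl

/-- For unit vectors `n, m` with `⟨n,m⟩ > 0`, `P = I - n⊗n`, `Ph = I - m⊗m`
and `B = P Ph`, the map `B` is an approximate isometry:
`‖B Bᵀ - P‖_F ≤ 4 ‖n - m‖²`. -/
theorem flat_B_approximate_isometry (d : ℕ) (n m : Fin (d + 1) → ℝ)
    (hn : ∑ i, n i ^ 2 = 1) (hm : ∑ i, m i ^ 2 = 1)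
    (hpos : 0 < n ⬝ᵥ m) :
    Real.sqrt (∑ i, ∑ j,
        (((((1 - Matrix.vecMulVec n n) * (1 - Matrix.vecMulVec m m)) *
            ((1 - Matrix.vecMulVec n n) * (1 - Matrix.vecMulVec m m))ᵀ -
          (1 - Matrix.vecMulVec n n)) : Matrix (Fin (d + 1)) (Fin (d + 1)) ℝ) i j) ^ 2)
      ≤ 4 * ∑ i, (n i - m i) ^ 2 :=
  flat_B_approximate_isometry_general d n m hn hm
end
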